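/- arXiv:1212.5687 — 4 statements merged into one kernel-verified Lean document; each statement's English description precedes it below -/
import Mathlib

section
/- Let q > 3 be a prime power and n > q an integer with gcd(q, n) = 1, (q − 1) | n, ord_n(q) = 2, and n = r(q − 1). Then for every integer l with 1 ≤ l ≤ r − 2 one has l·q ≢ l (mod n), and for every integer s with 1 ≤ s ≤ r − 2 one has (r + s)·q ≢ r + s (mod n); hence each of the q-ary cyclotomic cosets C_[l] = {l, lq} and C_[r+s] = {r+s, r+sq} modulo n has exactly two elements. -/
/-- The `q`-ary cyclotomic coset modulo `n` containing `a`, viewed in `ZMod n`. -/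
def cyclotomicCoset (q n : ℕ) (a : ZMod n) : Set (ZMod n) :=
  {x | ∃ t : ℕ, x = a * (q : ZMod n) ^ t}

lemma coset_eq_pair (q n : ℕ) (a : ZMod n) (h : (q : ZMod n) ^ 2 = 1) :
    cyclotomicCoset q n a = {a, a * q} := by
  ext x
  constructor
  · rintro ⟨t, rfl⟩
    rcases Nat.even_or_odd t with ⟨k, hk⟩ | ⟨k, hk⟩
    · left
      subst hk
      rw [show k + k = 2 * k by ring, pow_mul, h, one_pow, mul_one]
    · right
      subst hk
      rw [pow_succ, pow_mul, h, one_pow, one_mul]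
      exact rfl
  · rintro (rfl | rfl)
    · exact ⟨0, by simp⟩
    · exact ⟨1, by simp⟩

lemma key (q n r a : ℕ) (hq : 4 ≤ q) (hn : n = r * (q - 1)) (hra : ¬ r ∣ a) :
    ¬ a * q ≡ a [MOD n] := by
  intro h
  have hle : a ≤ a * q := Nat.le_mul_of_pos_right a (by omega)
  have h' : n ∣ a * q - a := (Nat.modEq_iff_dvd' hle).mp h.symm
  have heq : a * q - a = a * (q - 1) := by
    have := Nat.mul_sub a q 1
    omega
  rw [heq, hn] at h'
  exact hra ((Nat.mul_dvd_mul_iff_right (show 0 < q - 1 by omega)).mp h')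

theorem stmt_1 (q n r : ℕ) (hq : IsPrimePow q) (hq3 : 3 < q) (hnq : q < n)
    (hgcd : Nat.gcd q n = 1) (hdvd : (q - 1) ∣ n)
    (hord : orderOf ((q : ZMod n)) = 2) (hn : n = r * (q - 1)) :
    (∀ l : ℕ, 1 ≤ l → l ≤ r - 2 →
      ¬ (l * q ≡ l [MOD n]) ∧ (cyclotomicCoset q n (l : ZMod n)).ncard = 2) ∧
    (∀ s : ℕ, 1 ≤ s → s ≤ r - 2 →
      ¬ ((r + s) * q ≡ r + s [MOD n]) ∧
      (cyclotomicCoset q n ((r + s : ℕ) : ZMod n)).ncard = 2) := by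
  have hq2 : (q : ZMod n) ^ 2 = 1 := by
    rw [← hord]; exact pow_orderOf_eq_one _
  have hmain : ∀ a : ℕ, ¬ r ∣ a → ¬ (a * q ≡ a [MOD n]) ∧
      (cyclotomicCoset q n (a : ZMod n)).ncard = 2 := by
    intro a hra
    have hne : ¬ a * q ≡ a [MOD n] := key q n r a (by omega) hn hra
    refine ⟨hne, ?_⟩
    rw [coset_eq_pair q n _ hq2]
    refine Set.ncard_pair ?_
    intro hcontra
    apply hne
    rw [← ZMod.natCast_eq_natCast_iff]
    push_cast
    exact hcontra.symm
  constructor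
  · intro l h1 h2
    apply hmain l
    intro hd
    have := Nat.le_of_dvd (by omega) hd
    omega
  · intro s h1 h2
    apply hmain (r + s)
    intro hd
    have hrs : r ∣ s := (Nat.dvd_add_right ⟨1, by ring⟩).mp hd
    have := Nat.le_of_dvd (by omega) hrs
    omega
end

section
/- Let q ≥ 3 be a prime power, n > q a prime number, and m = ord_n(q) ≥ 2. Suppose s is an integer such that the q-ary cyclotomic coset C_[s] modulo n contains both s and s + 1, and that C_[s] ≠ C_[−s]. Then there exist F_q-linear codes C₂ ⊆ C₁ ⊆ F_q^n such that dim C₁ = n − m, dim C₂ = m, every nonzero codeword of C₁ has Hamming weight at least 3, and every nonzero codeword of the Euclidean dual C₂^⊥ has Hamming weight at least 3. (Via the CSS construction this yields an [[n, n − 2m, d ≥ 3]]_q quantum code.) -/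
open Polynomial

lemma aux_char {F : Type} [Field F] [Fintype F] {p e : ℕ} (hp : p.Prime)
    (he : 0 < e) (hF : Fintype.card F = p ^ e) : CharP F p := by
  have h1 : CharP F (ringChar F) := ringChar.charP F
  obtain ⟨k, hrp, hk⟩ := FiniteField.card F (ringChar F)
  have : p = ringChar F := by
    have hdvd : p ∣ ringChar F ^ (k : ℕ) := by
      rw [← hk, hF]
      exact dvd_pow_self p he.ne'
    exact (Nat.prime_dvd_prime_iff_eq hp hrp).mp (hp.dvd_of_dvd_pow hdvd)
  rwa [this]

lemma aux_finrank {F K : Type} [Field F] [Fintype F] [Field K] [Fintype K] [Algebra F K]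
    {p e n m q : ℕ} (hp : p.Prime) (he : 0 < e) (hpe : p ^ e = q) (hF : Fintype.card F = q)
    (hn : 1 < n) (hm : m = orderOf ((q : ℕ) : ZMod n)) (hm0 : 0 < m)
    {α : K} (hα : IsPrimitiveRoot α n)
    (hgen : ∀ x : K, ∃ g : Polynomial F, (Polynomial.aeval α) g = x) :
    Module.finrank F K = m := by
  classical
  have hq1 : 1 < q := by
    rw [← hpe]; exact Nat.one_lt_pow he.ne' hp.one_lt
  haveI : NeZero n := ⟨by omega⟩
  haveI hcF : CharP F p := aux_char hp he (hpe ▸ hF)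
  haveI hcK : CharP K p := charP_of_injective_algebraMap (algebraMap F K).injective p
  haveI : ExpChar K p := ExpChar.prime hp
  haveI : Module.Finite F K := Module.Finite.of_finite
  set d := Module.finrank F K with hd
  have hd0 : 0 < d := Module.finrank_pos
  have hcardK : Fintype.card K = q ^ d := by rw [← hF]; exact Module.card_eq_pow_finrank
  have hαne : α ≠ 0 := hα.ne_zero (by omega)
  -- n ∣ q ^ d - 1
  have h1 : α ^ (q ^ d - 1) = 1 := by
    rw [← hcardK]; exact FiniteField.pow_card_sub_one_eq_one α hαne
  have hnd : n ∣ q ^ d - 1 := hα.dvd_of_pow_eq_one _ h1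
  -- m ∣ d
  have hcast : ∀ k : ℕ, n ∣ q ^ k - 1 ↔ ((q : ZMod n)) ^ k = 1 := by
    intro k
    rw [← ZMod.natCast_eq_zero_iff]
    have : 1 ≤ q ^ k := Nat.one_le_pow _ _ (by omega)
    push_cast [this]
    constructor
    · intro h; linear_combination h
    · intro h; linear_combination h
  have hmd : m ∣ d := by
    rw [hm]; exact orderOf_dvd_of_pow_eq_one ((hcast d).mp hnd)
  -- n ∣ q ^ m - 1
  have hnm : n ∣ q ^ m - 1 := (hcast m).mpr (by rw [hm]; exact pow_orderOf_eq_one _)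
  -- every element of K is fixed by x ↦ x ^ q ^ m
  have hfix : ∀ x : K, x ^ q ^ m = x := by
    set σ : K →+* K := iterateFrobenius K p (e * m) with hσ
    have hσx : ∀ x : K, σ x = x ^ q ^ m := by
      intro x; rw [hσ, iterateFrobenius_def, pow_mul, hpe]
    have hcomm : ∀ a : F, σ (algebraMap F K a) = algebraMap F K a := by
      intro a
      rw [hσx, ← map_pow]
      congr 1
      conv_rhs => rw [← FiniteField.pow_card_pow (K := F) m a, hF]
    have hαfix : σ α = α := by
      rw [hσx]
      have : q ^ m - 1 + 1 = q ^ m := by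
        have : 1 ≤ q ^ m := Nat.one_le_pow _ _ (by omega)
        omega
      rw [← this, pow_add, pow_one, hα.pow_eq_one_iff_dvd _ |>.mpr hnm, one_mul]
    intro x
    obtain ⟨g, hg⟩ := hgen x
    let σ' : K →ₐ[F] K := { toRingHom := σ, commutes' := hcomm }
    have : σ' x = x := by
      rw [← hg, ← Polynomial.aeval_algHom_apply σ' α g]
      show Polynomial.aeval (σ α) g = _
      rw [hαfix]
    rw [← hσx]; exact this
  -- d ≤ m
  have hdm : d ≤ m := by
    have hP : (X ^ q ^ m - X : K[X]) ≠ 0 :=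
      FiniteField.X_pow_card_pow_sub_X_ne_zero K (by omega) hq1
    have hroots : (Finset.univ : Finset K) ⊆ (X ^ q ^ m - X : K[X]).roots.toFinset := by
      intro x _
      rw [Multiset.mem_toFinset, Polynomial.mem_roots hP]
      simp [Polynomial.IsRoot.def, hfix x]
    have hcard : Fintype.card K ≤ q ^ m := by
      calc Fintype.card K ≤ (X ^ q ^ m - X : K[X]).roots.toFinset.card :=
            Finset.card_le_card hroots
        _ ≤ Multiset.card (X ^ q ^ m - X : K[X]).roots := Multiset.toFinset_card_le _
        _ ≤ (X ^ q ^ m - X : K[X]).natDegree := Polynomial.card_roots' _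
        _ = q ^ m := FiniteField.X_pow_card_pow_sub_X_natDegree_eq K (by omega) hq1
    rw [hcardK] at hcard
    exact (Nat.pow_le_pow_iff_right hq1).mp hcard
  exact Nat.le_antisymm hdm (Nat.le_of_dvd hd0 hmd)

section Main
variable {F K : Type} [Field F] [Fintype F] [DecidableEq F] [Field K] [Fintype K] [Algebra F K]

lemma aux_main {p e q n m s : ℕ} (hp : p.Prime) (he : 0 < e) (hpe : p ^ e = q)
    (hF : Fintype.card F = q) (hq3 : 3 ≤ q) (hn : n.Prime) (hnq : q < n)
    (hm : m = orderOf ((q : ℕ) : ZMod n)) (hm2 : 2 ≤ m)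
    (hcons : ((s : ZMod n) + 1) ∈ cyclotomicCoset q n (s : ZMod n))
    (hne : cyclotomicCoset q n (s : ZMod n) ≠ cyclotomicCoset q n (-(s : ZMod n)))
    {α : K} (hα : IsPrimitiveRoot α n)
    (hgen : ∀ x : K, ∃ g : Polynomial F, (Polynomial.aeval α) g = x) :
    ∃ C₁ C₂ : Submodule F (Fin n → F), C₂ ≤ C₁ ∧
      Module.finrank F C₁ = n - m ∧
      Module.finrank F C₂ = m ∧
      (∀ x ∈ C₁, x ≠ 0 → 3 ≤ hammingNorm x) ∧
      (∀ y : Fin n → F, (∀ x ∈ C₂, ∑ i, x i * y i = 0) → y ≠ 0 → 3 ≤ hammingNorm y) := by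
  classical
  haveI : NeZero n := ⟨hn.ne_zero⟩
  haveI : Fact (Nat.Prime n) := ⟨hn⟩
  haveI : Fact (1 < n) := ⟨hn.one_lt⟩
  have hq1 : 1 < q := by omega
  have hm0 : 0 < m := by omega
  haveI hcF : CharP F p := aux_char hp he (hpe ▸ hF)
  haveI hcK : CharP K p := charP_of_injective_algebraMap (algebraMap F K).injective p
  haveI : ExpChar K p := ExpChar.prime hp
  have hrank : Module.finrank F K = m := aux_finrank hp he hpe hF hn.one_lt hm hm0 hα hgen
  haveI : Module.Finite F K := Module.Finite.of_finite
  have hcardK : Fintype.card K = q ^ m := by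
    rw [← hrank, ← hF]; exact Module.card_eq_pow_finrank
  -- Frobenius maps
  set Frob : ℕ → (K →+* K) := fun t => iterateFrobenius K p (e * t) with hFrobdef
  have hFrob : ∀ (t : ℕ) (x : K), Frob t x = x ^ q ^ t := by
    intro t x; rw [hFrobdef]; simp only [iterateFrobenius_def]; rw [pow_mul, hpe]
  have hfixF : ∀ (c : F) (t : ℕ), (algebraMap F K c) ^ q ^ t = algebraMap F K c := by
    intro c t
    rw [← map_pow]
    congr 1
    conv_rhs => rw [← FiniteField.pow_card_pow (K := F) t c, hF]
  have hKfix : ∀ z : K, z ^ q ^ m = z := by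
    intro z
    conv_rhs => rw [← FiniteField.pow_card (K := K) z, hcardK]
  have hαunit : α ≠ 0 := hα.ne_zero (by omega)
  have hαpow : ∀ a b : ℕ, α ^ a = α ^ b ↔ ((a : ZMod n) = (b : ZMod n)) := by
    have key : ∀ a b : ℕ, b ≤ a → (α ^ a = α ^ b ↔ ((a : ZMod n) = (b : ZMod n))) := by
      intro a b hba
      have h1 : α ^ a = α ^ (a - b) * α ^ b := by rw [← pow_add]; congr 1; omega
      have h2 : (α ^ a = α ^ b) ↔ α ^ (a - b) = 1 := by
        rw [h1]
        constructor
        · intro h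
          exact mul_right_cancel₀ (pow_ne_zero b hαunit) (by rw [h, one_mul])
        · intro h; rw [h, one_mul]
      rw [h2, hα.pow_eq_one_iff_dvd, ← ZMod.natCast_eq_zero_iff,
        Nat.cast_sub hba, sub_eq_zero]
    intro a b
    rcases le_total b a with h | h
    · exact key a b h
    · rw [eq_comm, key b a h, eq_comm]
  have hs0 : (s : ZMod n) ≠ 0 := by
    intro h
    obtain ⟨t, ht⟩ := hcons
    rw [h] at ht
    simp at ht
  -- the parity-check linear map
  set Φ : (Fin n → F) →ₗ[F] K :=
    { toFun := fun c => ∑ i : Fin n, c i • α ^ (s * (i : ℕ))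
      map_add' := by
        intro c d
        simp [add_smul, Finset.sum_add_distrib]
      map_smul' := by
        intro a c
        simp [smul_smul, Finset.smul_sum] } with hΦdef
  have hΦapply : ∀ c : Fin n → F, Φ c = ∑ i : Fin n, c i • α ^ (s * (i : ℕ)) := fun c => rfl
  -- single-coordinate vectors
  have hΦsingle : ∀ (i : Fin n) (a : F), Φ (Pi.single i a) = a • α ^ (s * (i : ℕ)) := by
    intro i a
    rw [hΦapply]
    rw [Finset.sum_eq_single i]
    · simp
    · intro j _ hj; rw [Pi.single_eq_of_ne hj, zero_smul]
    · simp
  -- all powers of α are in the range of Φ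
  have hpow_mem : ∀ j : ℕ, α ^ j ∈ LinearMap.range Φ := by
    intro j
    set i : Fin n := ⟨(((s : ZMod n))⁻¹ * (j : ZMod n)).val, ZMod.val_lt _⟩ with hi
    refine ⟨Pi.single i 1, ?_⟩
    rw [hΦsingle, one_smul, hαpow]
    push_cast
    rw [ZMod.natCast_val, ZMod.cast_id]
    field_simp
  have hsurj : Function.Surjective Φ := by
    have hrange : LinearMap.range Φ = ⊤ := by
      rw [eq_top_iff]
      intro x _
      obtain ⟨g, hg⟩ := hgen x
      rw [← hg, Polynomial.aeval_eq_sum_range]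
      exact Submodule.sum_mem _ fun j _ => Submodule.smul_mem _ _ (hpow_mem j)
    exact LinearMap.range_eq_top.mp hrange
  have hC1rank : Module.finrank F (LinearMap.ker Φ) = n - m := by
    have := LinearMap.finrank_range_add_finrank_ker Φ
    rw [LinearMap.range_eq_top.mpr hsurj] at this
    have h2 : Module.finrank F (⊤ : Submodule F K) = m := by
      rw [finrank_top]; exact hrank
    have h3 : Module.finrank F (Fin n → F) = n := by
      simp [Module.finrank_pi]
    omega
  obtain ⟨t₀, ht₀⟩ := hcons
  have hker2 : ∀ c : Fin n → F, Φ c = 0 →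
      ∑ i : Fin n, c i • α ^ ((s + 1) * (i : ℕ)) = 0 := by
    intro c hc
    have h1 : ∀ i : Fin n, α ^ ((s + 1) * (i : ℕ)) = (α ^ (s * (i : ℕ))) ^ q ^ t₀ := by
      intro i
      rw [← pow_mul, hαpow]
      push_cast
      linear_combination (i : ZMod n) * ht₀
    calc ∑ i : Fin n, c i • α ^ ((s + 1) * (i : ℕ))
        = ∑ i : Fin n, Frob t₀ (c i • α ^ (s * (i : ℕ))) := by
          refine Finset.sum_congr rfl fun i _ => ?_
          rw [h1 i, hFrob, Algebra.smul_def, Algebra.smul_def, mul_pow, hfixF]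
      _ = Frob t₀ (∑ i : Fin n, c i • α ^ (s * (i : ℕ))) := (map_sum _ _ _).symm
      _ = Frob t₀ (Φ c) := by rw [hΦapply]
      _ = 0 := by rw [hc, map_zero]
  have hwt : ∀ x : Fin n → F, Φ x = 0 → x ≠ 0 → 3 ≤ hammingNorm x := by
    intro x hx hx0
    by_contra hlt
    push_neg at hlt
    set S : Finset (Fin n) := Finset.univ.filter fun i => x i ≠ 0 with hSdef
    have hS : hammingNorm x = S.card := rfl
    have hmem : ∀ i : Fin n, i ∈ S ↔ x i ≠ 0 := by
      intro i; simp [hSdef]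
    have hSne : S.Nonempty := by
      obtain ⟨i, hi⟩ := Function.ne_iff.mp hx0
      exact ⟨i, (hmem i).mpr hi⟩
    have hsum : ∀ g : Fin n → K, ∑ i : Fin n, x i • g i = ∑ i ∈ S, x i • g i := by
      intro g
      refine (Finset.sum_subset (Finset.subset_univ S) fun i _ hi => ?_).symm
      have : x i = 0 := by
        by_contra h; exact hi ((hmem i).mpr h)
      rw [this, zero_smul]
    have hE0 : ∑ i ∈ S, x i • α ^ (s * (i : ℕ)) = 0 := by
      rw [← hsum]; rw [hΦapply] at hx; exact hx
    have hE1 : ∑ i ∈ S, x i • α ^ ((s + 1) * (i : ℕ)) = 0 := by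
      rw [← hsum]; exact hker2 x hx
    have hcard : S.card = 1 ∨ S.card = 2 := by
      have h1 : 1 ≤ S.card := Finset.card_pos.mpr hSne
      have h2 : S.card ≤ 2 := by omega
      omega
    rcases hcard with h1 | h2
    · obtain ⟨i, hi⟩ := Finset.card_eq_one.mp h1
      rw [hi, Finset.sum_singleton] at hE0
      rcases smul_eq_zero.mp hE0 with h | h
      · have : i ∈ S := by rw [hi]; exact Finset.mem_singleton_self i
        exact (hmem i).mp this h
      · exact pow_ne_zero _ hαunit h
    · obtain ⟨i, j, hij, hS2⟩ := Finset.card_eq_two.mp h2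
      have hxi : x i ≠ 0 := (hmem i).mp (by rw [hS2]; simp)
      have hxj : x j ≠ 0 := (hmem j).mp (by rw [hS2]; simp)
      rw [hS2, Finset.sum_pair hij] at hE0 hE1
      rw [Algebra.smul_def, Algebra.smul_def] at hE0 hE1
      set a := algebraMap F K (x i) with ha
      set b := algebraMap F K (x j) with hb
      have hane : a ≠ 0 := by
        rw [ha]; exact fun h => hxi ((_root_.map_eq_zero (algebraMap F K)).mp h)
      have hbne : b ≠ 0 := by
        rw [hb]; exact fun h => hxj ((_root_.map_eq_zero (algebraMap F K)).mp h)
      have hE1' : a * (α ^ (s * (i : ℕ)) * α ^ (i : ℕ))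
          + b * (α ^ (s * (j : ℕ)) * α ^ (j : ℕ)) = 0 := by
        rw [← pow_add, ← pow_add, show s * (i : ℕ) + (i : ℕ) = (s + 1) * (i : ℕ) by ring,
          show s * (j : ℕ) + (j : ℕ) = (s + 1) * (j : ℕ) by ring]
        exact hE1
      have h3 : b * α ^ (s * (j : ℕ)) * (α ^ (j : ℕ) - α ^ (i : ℕ)) = 0 := by
        linear_combination hE1' - α ^ (i : ℕ) * hE0
      have h4 : α ^ (j : ℕ) = α ^ (i : ℕ) := by
        rcases mul_eq_zero.mp h3 with h | h
        · rcases mul_eq_zero.mp h with h' | h'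
          · exact absurd h' hbne
          · exact absurd h' (pow_ne_zero _ hαunit)
        · exact sub_eq_zero.mp h
      exact hij (Fin.ext (hα.pow_inj j.isLt i.isLt h4)).symm
  -- the trace function
  set Tr : K → K := fun z => ∑ t ∈ Finset.range m, z ^ q ^ t with hTrdef
  have hTr_add : ∀ z w : K, Tr (z + w) = Tr z + Tr w := by
    intro z w
    simp only [hTrdef]
    rw [← Finset.sum_add_distrib]
    refine Finset.sum_congr rfl fun t _ => ?_
    rw [← hFrob, ← hFrob, ← hFrob, map_add]
  set TrH : K →+ K := AddMonoidHom.mk' Tr hTr_add with hTrH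
  have hTr_smul : ∀ (c : F) (z : K),
      Tr (algebraMap F K c * z) = algebraMap F K c * Tr z := by
    intro c z
    simp only [hTrdef]
    rw [Finset.mul_sum]
    refine Finset.sum_congr rfl fun t _ => ?_
    rw [mul_pow, hfixF]
  have hTr_q : ∀ z : K, (Tr z) ^ q = Tr z := by
    intro z
    simp only [hTrdef]
    have h1 : (∑ t ∈ Finset.range m, z ^ q ^ t) ^ q
        = ∑ t ∈ Finset.range m, z ^ q ^ (t + 1) := by
      have := map_sum (iterateFrobenius K p e) (fun t => z ^ q ^ t) (Finset.range m)
      rw [iterateFrobenius_def, hpe] at this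
      rw [this]
      refine Finset.sum_congr rfl fun t _ => ?_
      rw [iterateFrobenius_def, hpe, ← pow_mul, ← pow_succ]
    rw [h1]
    have h2 : ∑ t ∈ Finset.range (m + 1), z ^ q ^ t
        = (∑ t ∈ Finset.range m, z ^ q ^ (t + 1)) + z ^ q ^ 0 :=
      Finset.sum_range_succ' _ m
    have h3 : ∑ t ∈ Finset.range (m + 1), z ^ q ^ t
        = (∑ t ∈ Finset.range m, z ^ q ^ t) + z ^ q ^ m :=
      Finset.sum_range_succ _ m
    have h4 : z ^ q ^ m = z ^ q ^ 0 := by rw [hKfix z, pow_zero, pow_one]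
    linear_combination h3 - h2 + h4
  have hTr_ne : ∃ w : K, Tr w ≠ 0 := by
    by_contra hcon
    push_neg at hcon
    set P : Polynomial K := ∑ t ∈ Finset.range m, Polynomial.X ^ q ^ t with hP
    have hPne : P ≠ 0 := by
      have hc : P.coeff (q ^ (m - 1)) = 1 := by
        rw [hP, Polynomial.finset_sum_coeff]
        rw [Finset.sum_eq_single (m - 1)]
        · simp [Polynomial.coeff_X_pow]
        · intro t ht htne
          rw [Polynomial.coeff_X_pow, if_neg]
          intro hq'
          exact htne (Nat.pow_right_injective hq1 hq'.symm)
        · intro h'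
          exact absurd (Finset.mem_range.mpr (by omega)) h'
      intro h0; rw [h0] at hc; simp at hc
    have hdeg : P.natDegree ≤ q ^ (m - 1) := by
      apply Polynomial.natDegree_sum_le_of_forall_le
      intro t ht
      rw [Polynomial.natDegree_X_pow]
      exact Nat.pow_le_pow_right (by omega) (by simp only [Finset.mem_range] at ht; omega)
    have hroots : (Finset.univ : Finset K) ⊆ P.roots.toFinset := by
      intro w _
      rw [Multiset.mem_toFinset, Polynomial.mem_roots hPne]
      show P.eval w = 0
      rw [hP, Polynomial.eval_finset_sum]
      simpa [hTrdef] using hcon w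
    have hle : Fintype.card K ≤ q ^ (m - 1) := by
      calc Fintype.card K ≤ P.roots.toFinset.card := Finset.card_le_card hroots
        _ ≤ Multiset.card P.roots := Multiset.toFinset_card_le _
        _ ≤ P.natDegree := Polynomial.card_roots' P
        _ ≤ q ^ (m - 1) := hdeg
    rw [hcardK] at hle
    have : q ^ (m - 1) < q ^ m := Nat.pow_lt_pow_right hq1 (by omega)
    omega
  have hnondeg : ∀ z : K, (∀ γ : K, Tr (γ * z) = 0) → z = 0 := by
    intro z hz
    by_contra h0
    obtain ⟨w, hw⟩ := hTr_ne
    apply hw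
    rw [← hz (w * z⁻¹)]
    congr 1
    field_simp
  -- the inclusion of F-vectors into K-vectors
  set E : (Fin n → F) →ₗ[F] (Fin n → K) :=
    LinearMap.pi fun i => (Algebra.linearMap F K).comp (LinearMap.proj i) with hEdef
  have hEapply : ∀ (c : Fin n → F) (i : Fin n), E c i = algebraMap F K (c i) :=
    fun c i => rfl
  have hEinj : Function.Injective E := by
    intro c d h
    funext i
    have h2 : E c i = E d i := congrFun h i
    rw [hEapply, hEapply] at h2
    exact (algebraMap F K).injective h2
  -- the trace parametrization of the dual code
  set Ψ : K →ₗ[F] (Fin n → K) :=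
    { toFun := fun γ i => Tr (γ * α ^ (s * (i : ℕ)))
      map_add' := by
        intro γ δ
        funext i
        simp only [Pi.add_apply, add_mul]
        exact hTr_add _ _
      map_smul' := by
        intro c γ
        funext i
        simp only [Pi.smul_apply, RingHom.id_apply, Algebra.smul_def, mul_assoc]
        exact hTr_smul c _ } with hΨdef
  have hΨapply : ∀ (γ : K) (i : Fin n), Ψ γ i = Tr (γ * α ^ (s * (i : ℕ))) :=
    fun γ i => rfl
  -- fixed points of Frobenius are in the image of F
  have hfixmem : ∀ z : K, z ^ q = z → ∃ a : F, algebraMap F K a = z := by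
    intro z hz
    have hPne := FiniteField.X_pow_card_sub_X_ne_zero K hq1
    set T := (Polynomial.X ^ q - Polynomial.X : Polynomial K).roots.toFinset with hT
    have himage : Finset.univ.image (algebraMap F K) ⊆ T := by
      intro w hw
      simp only [Finset.mem_image] at hw
      obtain ⟨a, _, rfl⟩ := hw
      rw [hT, Multiset.mem_toFinset, Polynomial.mem_roots hPne]
      show Polynomial.eval _ _ = 0
      rw [Polynomial.eval_sub, Polynomial.eval_pow, Polynomial.eval_X, ← map_pow]
      have ha : a ^ q = a := by rw [← hF]; exact FiniteField.pow_card a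
      rw [ha, sub_self]
    have hTcard : T.card ≤ q := by
      calc T.card ≤ Multiset.card (Polynomial.X ^ q - Polynomial.X : Polynomial K).roots :=
            Multiset.toFinset_card_le _
        _ ≤ (Polynomial.X ^ q - Polynomial.X : Polynomial K).natDegree :=
            Polynomial.card_roots' _
        _ = q := FiniteField.X_pow_card_sub_X_natDegree_eq K hq1
    have hicard : (Finset.univ.image (algebraMap F K)).card = q := by
      rw [Finset.card_image_of_injective _ (algebraMap F K).injective,
        Finset.card_univ, hF]
    have heq : Finset.univ.image (algebraMap F K) = T :=
      Finset.eq_of_subset_of_card_le himage (by omega)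
    have hzT : z ∈ T := by
      rw [hT, Multiset.mem_toFinset, Polynomial.mem_roots hPne]
      show Polynomial.eval _ _ = 0
      rw [Polynomial.eval_sub, Polynomial.eval_pow, Polynomial.eval_X, hz, sub_self]
    rw [← heq] at hzT
    obtain ⟨a, _, ha⟩ := Finset.mem_image.mp hzT
    exact ⟨a, ha⟩
  have hΨle : LinearMap.range Ψ ≤ LinearMap.range E := by
    rintro _ ⟨γ, rfl⟩
    have hex : ∀ i : Fin n, ∃ a : F, algebraMap F K a = Ψ γ i := by
      intro i
      exact hfixmem _ (hTr_q _)
    choose c hc using hex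
    exact ⟨c, by funext i; rw [hEapply, hc]⟩
  -- coset equality from a single relation
  have hqm1 : ((q : ZMod n)) ^ m = 1 := by rw [hm]; exact pow_orderOf_eq_one _
  have hcoset : ∀ t : ℕ, (s : ZMod n) * (q : ZMod n) ^ t ≠ -(s : ZMod n) := by
    intro t ht
    apply hne
    have h1 : ((q : ZMod n)) ^ t = ((q : ZMod n)) ^ (t % m) := by
      conv_lhs => rw [← Nat.div_add_mod t m]
      rw [pow_add, pow_mul, hqm1, one_pow, one_mul]
    have h2 : (-(s : ZMod n)) * (q : ZMod n) ^ (m - t % m) = (s : ZMod n) := by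
      rw [← ht, h1, mul_assoc, ← pow_add]
      have hmod : t % m < m := Nat.mod_lt t hm0
      have : t % m + (m - t % m) = m := by omega
      rw [this, hqm1, mul_one]
    ext x
    constructor
    · rintro ⟨r, rfl⟩
      refine ⟨m - t % m + r, ?_⟩
      rw [pow_add, ← mul_assoc, h2]
    · rintro ⟨r, rfl⟩
      refine ⟨t + r, ?_⟩
      rw [← ht]; ring
  -- the geometric sums vanish
  have hgeom : ∀ t : ℕ, ∑ i : Fin n, α ^ ((s * q ^ t + s) * (i : ℕ)) = 0 := by
    intro t
    set β : K := α ^ (s * q ^ t + s) with hβ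
    have hβ1 : β ≠ 1 := by
      intro h
      have h0 : ((s * q ^ t + s : ℕ) : ZMod n) = ((0 : ℕ) : ZMod n) := by
        rw [← hαpow, pow_zero]
        exact h
      push_cast at h0
      exact hcoset t (by linear_combination h0)
    have hβn : β ^ n = 1 := by
      rw [hβ, ← pow_mul, hα.pow_eq_one_iff_dvd]
      exact dvd_mul_left n (s * q ^ t + s)
    calc ∑ i : Fin n, α ^ ((s * q ^ t + s) * (i : ℕ))
        = ∑ i ∈ Finset.range n, β ^ i := by
          rw [← Fin.sum_univ_eq_sum_range (fun i => β ^ i) n]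
          exact Finset.sum_congr rfl fun i _ => by rw [hβ, ← pow_mul]
      _ = (β ^ n - 1) / (β - 1) := geom_sum_eq hβ1 n
      _ = 0 := by rw [hβn, sub_self, zero_div]
  -- key computation (I)
  have hkeyI : ∀ γ : K, ∑ i : Fin n, Tr (γ * α ^ (s * (i : ℕ))) * α ^ (s * (i : ℕ)) = 0 := by
    intro γ
    have hterm : ∀ i : Fin n,
        Tr (γ * α ^ (s * (i : ℕ))) * α ^ (s * (i : ℕ))
          = ∑ t ∈ Finset.range m, γ ^ q ^ t * α ^ ((s * q ^ t + s) * (i : ℕ)) := by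
      intro i
      simp only [hTrdef]
      rw [Finset.sum_mul]
      refine Finset.sum_congr rfl fun t _ => ?_
      rw [mul_pow, ← pow_mul, mul_assoc, ← pow_add]
      congr 2
      ring
    rw [Finset.sum_congr rfl fun i _ => hterm i, Finset.sum_comm]
    rw [Finset.sum_eq_zero]
    intro t _
    rw [← Finset.mul_sum, hgeom t, mul_zero]
  -- key computation (II)
  have hkeyII : ∀ (γ : K) (y : Fin n → F),
      ∑ i : Fin n, Tr (γ * α ^ (s * (i : ℕ))) * algebraMap F K (y i)
        = Tr (γ * Φ y) := by
    intro γ y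
    have hterm : ∀ i : Fin n,
        Tr (γ * α ^ (s * (i : ℕ))) * algebraMap F K (y i)
          = ∑ t ∈ Finset.range m, (γ * (y i • α ^ (s * (i : ℕ)))) ^ q ^ t := by
      intro i
      simp only [hTrdef]
      rw [Finset.sum_mul]
      refine Finset.sum_congr rfl fun t _ => ?_
      rw [Algebra.smul_def, mul_pow, mul_pow, mul_pow, hfixF]
      ring
    rw [Finset.sum_congr rfl fun i _ => hterm i, Finset.sum_comm]
    simp only [hTrdef]
    refine Finset.sum_congr rfl fun t _ => ?_
    rw [hΦapply, Finset.mul_sum,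
      ← hFrob t (∑ i : Fin n, γ * (y i • α ^ (s * (i : ℕ)))), map_sum]
    exact Finset.sum_congr rfl fun i _ => by rw [hFrob]
  -- assemble everything
  refine ⟨LinearMap.ker Φ, Submodule.comap E (LinearMap.range Ψ), ?_, hC1rank, ?_, ?_, ?_⟩
  · -- C₂ ≤ C₁
    intro x hx
    obtain ⟨γ, hγ⟩ := Submodule.mem_comap.mp hx
    rw [LinearMap.mem_ker, hΦapply]
    have hxi : ∀ i : Fin n, algebraMap F K (x i) = Tr (γ * α ^ (s * (i : ℕ))) := by
      intro i
      have := congrFun hγ i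
      rw [hEapply] at this
      rw [← this]
      exact hΨapply γ i
    calc ∑ i : Fin n, x i • α ^ (s * (i : ℕ))
        = ∑ i : Fin n, Tr (γ * α ^ (s * (i : ℕ))) * α ^ (s * (i : ℕ)) := by
          refine Finset.sum_congr rfl fun i _ => ?_
          rw [Algebra.smul_def, hxi i]
      _ = 0 := hkeyI γ
  · -- finrank C₂ = m
    have hΨinj : Function.Injective Ψ := by
      rw [← LinearMap.ker_eq_bot]
      rw [LinearMap.ker_eq_bot']
      intro γ hγ
      apply hnondeg
      intro δ
      obtain ⟨c, hc⟩ := hsurj δ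
      rw [mul_comm, ← hc, hΦapply, Finset.mul_sum]
      have hterm : ∀ i : Fin n, γ * (c i • α ^ (s * (i : ℕ)))
          = algebraMap F K (c i) * (γ * α ^ (s * (i : ℕ))) := by
        intro i; rw [Algebra.smul_def]; ring
      rw [Finset.sum_congr rfl fun i _ => hterm i]
      rw [show (Tr (∑ i : Fin n, algebraMap F K (c i) * (γ * α ^ (s * (i : ℕ)))))
          = TrH (∑ i : Fin n, algebraMap F K (c i) * (γ * α ^ (s * (i : ℕ)))) from rfl]
      rw [map_sum]
      rw [Finset.sum_eq_zero]
      intro i _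
      show Tr (algebraMap F K (c i) * (γ * α ^ (s * (i : ℕ)))) = 0
      rw [hTr_smul]
      have : Tr (γ * α ^ (s * (i : ℕ))) = 0 := by
        have := congrFun hγ i
        rwa [hΨapply] at this
      rw [this, mul_zero]
    have h1 : Submodule.map E (Submodule.comap E (LinearMap.range Ψ))
        = LinearMap.range Ψ := by
      rw [Submodule.map_comap_eq]
      exact inf_eq_right.mpr hΨle
    have h2 := LinearEquiv.finrank_eq
      (Submodule.equivMapOfInjective E hEinj (Submodule.comap E (LinearMap.range Ψ)))
    rw [h1] at h2
    rw [h2, LinearMap.finrank_range_of_inj hΨinj, hrank]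
  · -- min weight of C₁
    intro x hx hx0
    exact hwt x (LinearMap.mem_ker.mp hx) hx0
  · -- min weight of the dual of C₂
    intro y hy hy0
    apply hwt y _ hy0
    apply hnondeg (Φ y)
    intro γ
    obtain ⟨c, hc⟩ := hΨle ⟨γ, rfl⟩
    have hcC2 : c ∈ Submodule.comap E (LinearMap.range Ψ) := by
      rw [Submodule.mem_comap, hc]
      exact ⟨γ, rfl⟩
    have h0 := hy c hcC2
    have h1 : algebraMap F K (∑ i : Fin n, c i * y i) = 0 := by rw [h0, map_zero]
    rw [map_sum] at h1
    rw [← hkeyII γ y]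
    rw [← h1]
    refine Finset.sum_congr rfl fun i _ => ?_
    rw [map_mul]
    congr 1
    have := congrFun hc i
    rw [hEapply] at this
    exact (hΨapply γ i).symm.trans this.symm

end Main

theorem stmt_7 (q n m s : ℕ) (F : Type) [Field F] [Fintype F] [DecidableEq F]
    (hF : Fintype.card F = q)
    (hq : IsPrimePow q) (hq3 : 3 ≤ q) (hp : n.Prime) (hnq : q < n)
    (hm : m = orderOf ((q : ZMod n))) (hm2 : 2 ≤ m)
    (hcons : ((s : ZMod n) + 1) ∈ cyclotomicCoset q n (s : ZMod n))
    (hne : cyclotomicCoset q n (s : ZMod n) ≠ cyclotomicCoset q n (-(s : ZMod n))) :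
    ∃ C₁ C₂ : Submodule F (Fin n → F), C₂ ≤ C₁ ∧
      Module.finrank F C₁ = n - m ∧
      Module.finrank F C₂ = m ∧
      (∀ x ∈ C₁, x ≠ 0 → 3 ≤ hammingNorm x) ∧
      (∀ y : Fin n → F, (∀ x ∈ C₂, ∑ i, x i * y i = 0) → y ≠ 0 → 3 ≤ hammingNorm y) := by
  classical
  obtain ⟨p, e, hpp, he, hpe⟩ := hq
  have hp0 : p.Prime := Nat.prime_iff.mpr hpp
  haveI : Fact (Nat.Prime n) := ⟨hp⟩
  haveI : NeZero n := ⟨hp.ne_zero⟩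
  have hq1 : 1 < q := by omega
  haveI hcF : CharP F p := aux_char hp0 he (hpe ▸ hF)
  set f : Polynomial F := (Polynomial.cyclotomic n F).factor with hf
  have hfi : Irreducible f := Polynomial.irreducible_factor _
  haveI : Fact (Irreducible f) := ⟨hfi⟩
  have hfdvd : f ∣ Polynomial.cyclotomic n F := by
    apply Polynomial.factor_dvd_of_natDegree_ne_zero
    rw [Polynomial.natDegree_cyclotomic]
    have := Nat.totient_pos.mpr (show 0 < n by omega)
    omega
  set K := AdjoinRoot f with hK
  set α : K := AdjoinRoot.root f with hα'
  haveI hcK : CharP K p := charP_of_injective_algebraMap (algebraMap F K).injective p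
  haveI : NeZero (n : K) := by
    refine ⟨fun hzero => ?_⟩
    have hdvd : p ∣ n := (CharP.cast_eq_zero_iff K p n).mp hzero
    have : p = n := (Nat.prime_dvd_prime_iff_eq hp0 hp).mp hdvd
    have hple : p ≤ q := by
      rw [← hpe]; exact Nat.le_self_pow he.ne' p
    omega
  have hroot : Polynomial.IsRoot (Polynomial.cyclotomic n K) α := by
    show Polynomial.eval α (Polynomial.cyclotomic n K) = 0
    rw [← Polynomial.map_cyclotomic n (algebraMap F K), Polynomial.eval_map,
      ← Polynomial.aeval_def]
    obtain ⟨g, hg⟩ := hfdvd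
    rw [hg, map_mul]
    rw [show (Polynomial.aeval α) f = 0 from by
      rw [hα', AdjoinRoot.aeval_eq, AdjoinRoot.mk_self], zero_mul]
  have hα : IsPrimitiveRoot α n := Polynomial.isRoot_cyclotomic_iff.mp hroot
  set pb := AdjoinRoot.powerBasis (show f ≠ 0 from hfi.ne_zero) with hpb
  haveI : Fintype K := Module.fintypeOfFintype pb.basis
  have hgen : ∀ x : K, ∃ g : Polynomial F, (Polynomial.aeval α) g = x := by
    intro x
    obtain ⟨g, hg⟩ := AdjoinRoot.mk_surjective x
    exact ⟨g, by rw [hα', AdjoinRoot.aeval_eq, hg]⟩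
  exact aux_main hp0 he hpe hF hq3 hp hnq hm hm2 hcons hne hα hgen
end

section
/- Let q ≥ 3 be a prime power, n > q a prime number, and m = ord_n(q) ≥ 2. Let s be an integer such that the q-ary cyclotomic coset C_[s] modulo n contains both s and s + 1, with C_[s] ≠ C_[s+2], and suppose that the set Z = C_[s] ∪ C_[s+2] satisfies Z ∩ Z^{−1} = ∅, where Z^{−1} = { −z mod n : z ∈ Z }. Then there exist F_q-linear codes C ⊆ C′ ⊆ F_q^n such that the Euclidean dual satisfies C^⊥ ⊆ C, dim C = n − 2m, every nonzero codeword of C has Hamming weight at least 4, dim C′ = n − m, and every nonzero codeword of C′ has Hamming weight at least 3. (Via Steane's enlargement construction this yields an [[n, n − 3m, d ≥ 4]]_q quantum code.) -/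
open Polynomial Finset

namespace Polynomial

theorem ofFn_toFn_of_degree_lt {R : Type*} [Semiring R] [DecidableEq R] {n : ℕ} {p : R[X]}
    (hp : p.degree < n) : ofFn n (toFn n p) = p := by
  ext i
  by_cases hi : i < n
  · simp [hi, toFn]
  · rw [ofFn_coeff_eq_zero_of_ge _ (not_lt.mp hi),
      coeff_eq_zero_of_degree_lt (hp.trans_le (by exact_mod_cast not_lt.mp hi))]

theorem card_support_ofFn_le_hammingNorm {R : Type*} [Semiring R] [DecidableEq R] {n : ℕ}
    (v : Fin n → R) : #(ofFn n v).support ≤ hammingNorm v := by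
  calc #(ofFn n v).support ≤ #((univ.filter (v · ≠ 0)).image Fin.val) := by
        refine card_le_card fun i hi => ?_
        have hin : i < n := by
          by_contra h
          exact mem_support_iff.mp hi (ofFn_coeff_eq_zero_of_ge v (not_lt.mp h))
        refine mem_image.mpr ⟨⟨i, hin⟩, ?_, rfl⟩
        simpa [hin] using mem_support_iff.mp hi
    _ ≤ hammingNorm v := card_image_le

theorem eval₂_ofFn {R S : Type*} [Semiring R] [DecidableEq R] [CommSemiring S] {n : ℕ}
    (f : R →+* S) (v : Fin n → R) (x : S) :
    (ofFn n v).eval₂ f x = ∑ i, f (v i) * x ^ (i : ℕ) := by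
  simp [ofFn_eq_sum_monomial, eval₂_finsetSum, eval₂_monomial]

theorem eval_prod_X_sub_C_eq_zero {ι R : Type*} [CommRing R] {T : Finset ι} {f : ι → R} {i : ι}
    (hi : i ∈ T) : (∏ j ∈ T, (X - C (f j))).eval (f i) = 0 := by
  rw [eval_prod]
  exact prod_eq_zero hi (by simp)

theorem prod_X_sub_C_dvd_iff {L : Type*} [Field L] {S : Finset L} {p : L[X]} :
    (∏ β ∈ S, (X - C β)) ∣ p ↔ ∀ β ∈ S, p.eval β = 0 := by
  rcases eq_or_ne p 0 with rfl | hp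
  · simp
  rw [prod_eq_multiset_prod, Multiset.prod_X_sub_C_dvd_iff_le_roots hp,
    Multiset.le_iff_subset S.nodup]
  simp [Multiset.subset_iff, mem_roots hp]

theorem dvd_iff_forall_eval_map_eq_zero {K L : Type*} [Field K] [Field L] [Algebra K L]
    {g p : K[X]} {S : Finset L} (hS : g.map (algebraMap K L) = ∏ β ∈ S, (X - C β)) :
    g ∣ p ↔ ∀ β ∈ S, (p.map (algebraMap K L)).eval β = 0 := by
  rw [← map_dvd_map' (algebraMap K L), hS, prod_X_sub_C_dvd_iff]

end Polynomial

theorem IsPrimitiveRoot.eq_zero_of_eval_pow_add_eq_zero {L : Type*} [Field L] {ζ : L} {n : ℕ}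
    (hζ : IsPrimitiveRoot ζ n) {p : L[X]} (hp : p.degree < n) {b δ : ℕ} (hδ : #p.support ≤ δ)
    (hroots : ∀ r < δ, p.eval (ζ ^ (b + r)) = 0) : p = 0 := by
  have hlt : ∀ i ∈ p.support, i < n := fun i hi => by
    exact_mod_cast (le_degree_of_mem_supp i hi).trans_lt hp
  set e := p.support.equivFin.symm
  have hc : (fun k => p.coeff (e k) * ζ ^ (b * e k)) = 0 := by
    refine Matrix.eq_zero_of_forall_pow_sum_mul_pow_eq_zero (f := fun k => ζ ^ (e k : ℕ))
      (fun k l hkl => e.injective (Subtype.ext (hζ.pow_inj (hlt _ (e k).2) (hlt _ (e l).2) hkl)))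
      fun r => ?_
    rw [← hroots r (r.2.trans_le hδ), eval_eq_sum, sum_def, ← sum_coe_sort p.support]
    exact Fintype.sum_equiv e _ _ fun k => by ring
  by_contra hp0
  obtain ⟨i, hi⟩ := nonempty_support_iff.mpr hp0
  have hζ0 : ζ ≠ 0 := hζ.ne_zero (Nat.ne_zero_of_lt (hlt i hi))
  have := congr_fun hc (e.symm ⟨i, hi⟩)
  simp [e, hζ0, mem_support_iff.mp hi] at this

section PolynomialCode

variable {K : Type*} [Field K] [DecidableEq K]

noncomputable def polynomialCode (n : ℕ) (g : K[X]) : Submodule K (Fin n → K) :=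
  LinearMap.ker ((AdjoinRoot.mkₐ g).toLinearMap ∘ₗ ofFn n)

variable {n : ℕ} {g : K[X]}

theorem mem_polynomialCode {x : Fin n → K} : x ∈ polynomialCode n g ↔ g ∣ ofFn n x := by
  simp [polynomialCode, AdjoinRoot.mk_eq_zero]

theorem polynomialCode_le_of_dvd {g' : K[X]} (h : g ∣ g') :
    polynomialCode n g' ≤ polynomialCode n g :=
  fun _ hx => mem_polynomialCode.mpr (h.trans (mem_polynomialCode.mp hx))

theorem toFn_mem_polynomialCode {p : K[X]} (hp : g ∣ p) (hdeg : p.degree < n) :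
    toFn n p ∈ polynomialCode n g := by
  rwa [mem_polynomialCode, ofFn_toFn_of_degree_lt hdeg]

theorem finrank_polynomialCode (hg : g.Monic) (hgn : g.natDegree ≤ n) :
    Module.finrank K (polynomialCode n g) = n - g.natDegree := by
  set f := (AdjoinRoot.mkₐ g).toLinearMap ∘ₗ ofFn n
  have hsurj : Function.Surjective f := by
    intro c
    obtain ⟨p, rfl⟩ := AdjoinRoot.mk_surjective c
    refine ⟨toFn n (p %ₘ g), ?_⟩
    have hdeg : (p %ₘ g).degree < n :=
      (degree_modByMonic_lt p hg).trans_le (degree_le_natDegree.trans (by exact_mod_cast hgn))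
    change AdjoinRoot.mk g (ofFn n (toFn n (p %ₘ g))) = AdjoinRoot.mk g p
    rw [ofFn_toFn_of_degree_lt hdeg, ← AdjoinRoot.modByMonicHom_mk hg]
    exact AdjoinRoot.mk_leftInverse hg _
  have := LinearMap.finrank_range_add_finrank_ker f
  rw [LinearMap.range_eq_top.mpr hsurj, finrank_top, (AdjoinRoot.powerBasis' hg).finrank,
    AdjoinRoot.powerBasis'_dim, Module.finrank_fin_fun] at this
  change Module.finrank K f.ker = _
  omega

variable {L : Type*} [Field L] [Algebra K L]

theorem lt_hammingNorm_of_mem_polynomialCode {ζ : L} (hζ : IsPrimitiveRoot ζ n) {b δ : ℕ}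
    (hg : ∀ r < δ, (g.map (algebraMap K L)).eval (ζ ^ (b + r)) = 0) {x : Fin n → K}
    (hx : x ∈ polynomialCode n g) (hx0 : x ≠ 0) : δ < hammingNorm x := by
  by_contra! h
  obtain ⟨c, hc⟩ := mem_polynomialCode.mp hx
  have : (ofFn n x).map (algebraMap K L) = 0 := by
    refine hζ.eq_zero_of_eval_pow_add_eq_zero (b := b) (δ := δ)
      (by rw [degree_map]; exact ofFn_degree_lt x) ?_
      fun r hr => by rw [hc, Polynomial.map_mul, eval_mul, hg r hr, zero_mul]
    rw [support_map_of_injective _ (algebraMap K L).injective]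
    exact (card_support_ofFn_le_hammingNorm x).trans h
  rw [Polynomial.map_eq_zero_iff (algebraMap K L).injective, ← (ofFn n).map_zero] at this
  exact hx0 (injective_ofFn n this)

theorem sum_algebraMap_mul_coeff_map_mul_eq_zero {y : Fin n → K}
    (hy : ∀ x ∈ polynomialCode n g, ∑ i, x i * y i = 0) {h : L[X]}
    (hh : (g.map (algebraMap K L) * h).degree < n) :
    ∑ i : Fin n, algebraMap K L (y i) * (g.map (algebraMap K L) * h).coeff i = 0 := by
  conv_lhs => rw [← h.sum_C_mul_X_pow_eq]
  simp only [sum_def, mul_sum, finsetSum_coeff]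
  rw [sum_comm]
  refine sum_eq_zero fun j hj => ?_
  have hdeg : (g * X ^ j).degree < (n : WithBot ℕ) := by
    refine lt_of_le_of_lt ?_ hh
    rw [degree_mul, degree_mul, degree_map, degree_X_pow]
    exact add_le_add_right (le_degree_of_mem_supp j hj) _
  have hmem := hy _ (toFn_mem_polynomialCode (dvd_mul_right g (X ^ j)) hdeg)
  calc ∑ i : Fin n, algebraMap K L (y i) *
        (g.map (algebraMap K L) * (C (h.coeff j) * X ^ j)).coeff i
      = h.coeff j * algebraMap K L (∑ i, toFn n (g * X ^ j) i * y i) := by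
        have : g.map (algebraMap K L) * (C (h.coeff j) * X ^ j) =
            C (h.coeff j) * (g * X ^ j).map (algebraMap K L) := by
          rw [Polynomial.map_mul, Polynomial.map_pow, map_X]
          ring
        simp only [this, coeff_C_mul, coeff_map, map_sum, map_mul, mul_sum, toFn,
          LinearMap.pi_apply, lcoeff_apply]
        exact sum_congr rfl fun i _ => by ring
    _ = 0 := by rw [hmem, map_zero, mul_zero]

theorem mem_polynomialCode_of_orthogonal {S : Finset L}
    (hS : g.map (algebraMap K L) = ∏ β ∈ S, (X - C β)) (hroot : ∀ β ∈ S, β ^ n = 1)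
    (hinv : ∀ β ∈ S, ∀ γ ∈ S, β * γ ≠ 1) {y : Fin n → K}
    (hy : ∀ x ∈ polynomialCode n g, ∑ i, x i * y i = 0) : y ∈ polynomialCode n g := by
  classical
  rw [mem_polynomialCode, dvd_iff_forall_eval_map_eq_zero hS]
  intro β hβ
  obtain ⟨h, hh⟩ : g.map (algebraMap K L) ∣ ofFn n (fun i => β ^ (i : ℕ)) := by
    rw [hS, prod_X_sub_C_dvd_iff]
    intro γ hγ
    have hβγ : (β * γ) ^ n = 1 := by rw [mul_pow, hroot β hβ, hroot γ hγ, one_mul]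
    rw [eval, eval₂_ofFn]
    simp only [RingHom.id_apply, ← mul_pow]
    rw [Fin.sum_univ_eq_sum_range (fun i => (β * γ) ^ i), geom_sum_eq (hinv β hβ γ hγ), hβγ,
      sub_self, zero_div]
  rw [eval_map, eval₂_ofFn]
  calc ∑ i : Fin n, algebraMap K L (y i) * β ^ (i : ℕ)
      = ∑ i : Fin n, algebraMap K L (y i) * (g.map (algebraMap K L) * h).coeff i := by
        simp [← hh]
    _ = 0 := sum_algebraMap_mul_coeff_map_mul_eq_zero hy (hh ▸ ofFn_degree_lt _)

end PolynomialCode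

namespace FiniteField

variable {K L : Type*} [Field K] [Fintype K] [Field L] [Algebra K L]

theorem mem_range_algebraMap_of_pow_card_eq {x : L} (hx : x ^ Fintype.card K = x) :
    x ∈ Set.range (algebraMap K L) := by
  have hK : 1 < Fintype.card K := Fintype.one_lt_card
  have hroots := roots_X_pow_card_sub_X K
  have hmap := roots_map_of_injective_of_card_eq_natDegree (algebraMap K L).injective
    (p := X ^ Fintype.card K - X) (by rw [hroots, X_pow_card_sub_X_natDegree_eq K hK]; rfl)
  have hmem : x ∈ ((X ^ Fintype.card K - X : K[X]).map (algebraMap K L)).roots := by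
    rw [mem_roots ((Polynomial.map_ne_zero_iff (algebraMap K L).injective).mpr
      (X_pow_card_sub_X_ne_zero K hK))]
    simp [hx]
  rw [← hmap, hroots] at hmem
  obtain ⟨a, -, rfl⟩ := Multiset.mem_map.mp hmem
  exact ⟨a, rfl⟩

theorem exists_monic_map_eq_prod_X_sub_C {S : Finset L}
    (hS : ∀ β ∈ S, β ^ Fintype.card K ∈ S) :
    ∃ g : K[X], g.Monic ∧ g.map (algebraMap K L) = ∏ β ∈ S, (X - C β) := by
  classical
  set φ : L →+* L := (frobeniusAlgHom K L).toRingHom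
  have hφ : ∀ x, φ x = x ^ Fintype.card K := fun _ => rfl
  have himg : S.image φ = S :=
    eq_of_subset_of_card_le (image_subset_iff.mpr fun β hβ => hφ β ▸ hS β hβ)
      (card_image_of_injective _ φ.injective).ge
  have hfix : (∏ β ∈ S, (X - C β)).map φ = ∏ β ∈ S, (X - C β) := by
    simp only [Polynomial.map_prod, Polynomial.map_sub, map_X, map_C]
    conv_rhs => rw [← himg]
    rw [prod_image fun _ _ _ _ h => φ.injective h]
  have hlifts : ∏ β ∈ S, (X - C β) ∈ lifts (algebraMap K L) :=
    (lifts_iff_coeff_lifts _).mpr fun k => mem_range_algebraMap_of_pow_card_eq <| by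
      simpa [coeff_map, hφ] using congr_arg (coeff · k) hfix
  obtain ⟨g, hg, -, hmonic⟩ :=
    lifts_and_degree_eq_and_monic hlifts (monic_prod_of_monic _ _ fun β _ => monic_X_sub_C β)
  exact ⟨g, hmonic, hg⟩

theorem natCast_ne_zero_of_card_lt {n : ℕ} (hn : n.Prime) (h : Fintype.card K < n) :
    (n : K) ≠ 0 := by
  intro h0
  rcases hn.eq_one_or_self_of_dvd _ ((CharP.cast_eq_zero_iff K (ringChar K) n).mp h0) with h1 | h1
  · exact CharP.ringChar_ne_one h1
  · have : ringChar K ∣ Fintype.card K :=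
      (CharP.cast_eq_zero_iff K (ringChar K) _).mp (cast_card_eq_zero K)
    exact (Nat.le_of_dvd Fintype.card_pos (h1 ▸ this)).not_gt h

end FiniteField

namespace IsPrimitiveRoot

variable {M : Type*} [CommMonoid M] {ζ : M} {n : ℕ} [NeZero n]

theorem pow_eq_pow_iff_natCast_eq (hζ : IsPrimitiveRoot ζ n) {a b : ℕ} :
    ζ ^ a = ζ ^ b ↔ (a : ZMod n) = b := by
  rw [(hζ.isOfFinOrder (NeZero.ne n)).pow_eq_pow_iff_modEq, ← hζ.eq_orderOf,
    ZMod.natCast_eq_natCast_iff]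

theorem pow_val_natCast (hζ : IsPrimitiveRoot ζ n) (a : ℕ) : ζ ^ (a : ZMod n).val = ζ ^ a :=
  hζ.pow_eq_pow_iff_natCast_eq.mpr (ZMod.natCast_zmod_val _)

theorem pow_val_injective (hζ : IsPrimitiveRoot ζ n) :
    Function.Injective fun z : ZMod n => ζ ^ z.val := fun z w h => by
  simpa using hζ.pow_eq_pow_iff_natCast_eq.mp h

theorem pow_val_pow (hζ : IsPrimitiveRoot ζ n) (z : ZMod n) (k : ℕ) :
    (ζ ^ z.val) ^ k = ζ ^ (k * z).val := by
  rw [← pow_mul, hζ.pow_eq_pow_iff_natCast_eq]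
  simp [mul_comm]

theorem pow_val_mul_pow_val_eq_one_iff (hζ : IsPrimitiveRoot ζ n) (z w : ZMod n) :
    ζ ^ z.val * ζ ^ w.val = 1 ↔ z + w = 0 := by
  rw [← pow_add, ← pow_zero ζ, hζ.pow_eq_pow_iff_natCast_eq]
  simp

end IsPrimitiveRoot

theorem IsPrimitiveRoot.exists_monic_map_eq_prod {K L : Type*} [Field K] [Fintype K] [Field L]
    [Algebra K L] {ζ : L} {n : ℕ} [NeZero n] (hζ : IsPrimitiveRoot ζ n) {T : Finset (ZMod n)}
    (hT : ∀ z ∈ T, (Fintype.card K : ZMod n) * z ∈ T) :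
    ∃ g : K[X], g.Monic ∧ g.natDegree = #T ∧
      g.map (algebraMap K L) = ∏ z ∈ T, (X - C (ζ ^ z.val)) := by
  classical
  obtain ⟨g, hg, hmap⟩ := FiniteField.exists_monic_map_eq_prod_X_sub_C
    (S := T.image fun z => ζ ^ z.val) (K := K) <| by
      simp only [mem_image]
      rintro _ ⟨z, hz, rfl⟩
      exact ⟨_, hT z hz, (hζ.pow_val_pow z _).symm⟩
  rw [prod_image fun z _ w _ h => hζ.pow_val_injective h] at hmap
  refine ⟨g, hg, ?_, hmap⟩
  rw [← hg.natDegree_map (algebraMap K L), hmap,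
    natDegree_prod_of_monic _ _ fun _ _ => monic_X_sub_C _]
  simp only [natDegree_X_sub_C, sum_const, smul_eq_mul, mul_one]

theorem ZMod.isOfFinOrder_of_ne_zero {p : ℕ} [Fact p.Prime] {a : ZMod p} (ha : a ≠ 0) :
    IsOfFinOrder a :=
  isOfFinOrder_iff_pow_eq_one.mpr
    ⟨p - 1, by have := (Fact.out : p.Prime).two_le; omega, ZMod.pow_card_sub_one_eq_one ha⟩

section CyclotomicCoset

variable {q n : ℕ}

theorem self_mem_cyclotomicCoset (a : ZMod n) : a ∈ cyclotomicCoset q n a := ⟨0, by simp⟩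

theorem natCast_mul_mem_cyclotomicCoset {a x : ZMod n} (hx : x ∈ cyclotomicCoset q n a) :
    (q : ZMod n) * x ∈ cyclotomicCoset q n a := by
  obtain ⟨t, rfl⟩ := hx
  exact ⟨t + 1, by ring⟩

theorem cyclotomicCoset_subset_of_mem {a x : ZMod n} (hx : x ∈ cyclotomicCoset q n a) :
    cyclotomicCoset q n x ⊆ cyclotomicCoset q n a := by
  obtain ⟨i, rfl⟩ := hx
  rintro _ ⟨t, rfl⟩
  exact ⟨i + t, by ring⟩

theorem cyclotomicCoset_eq_of_mem (hq : IsOfFinOrder (q : ZMod n)) {a x : ZMod n}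
    (hx : x ∈ cyclotomicCoset q n a) : cyclotomicCoset q n x = cyclotomicCoset q n a := by
  refine (cyclotomicCoset_subset_of_mem hx).antisymm (cyclotomicCoset_subset_of_mem ?_)
  obtain ⟨i, rfl⟩ := hx
  obtain ⟨k, hk⟩ := Nat.exists_eq_add_one_of_ne_zero hq.orderOf_pos.ne'
  refine ⟨i * k, ?_⟩
  rw [mul_assoc, ← pow_add, show i + i * k = (k + 1) * i by ring, pow_mul, ← hk,
    pow_orderOf_eq_one, one_pow, mul_one]

theorem disjoint_cyclotomicCoset (hq : IsOfFinOrder (q : ZMod n)) {a b : ZMod n}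
    (h : cyclotomicCoset q n a ≠ cyclotomicCoset q n b) :
    Disjoint (cyclotomicCoset q n a) (cyclotomicCoset q n b) :=
  Set.disjoint_left.mpr fun _ ha hb =>
    h ((cyclotomicCoset_eq_of_mem hq ha).symm.trans (cyclotomicCoset_eq_of_mem hq hb))

theorem exists_finset_coe_eq_cyclotomicCoset [Fact n.Prime] (hq : IsOfFinOrder (q : ZMod n))
    {a : ZMod n} (ha : a ≠ 0) :
    ∃ T : Finset (ZMod n), ↑T = cyclotomicCoset q n a ∧ #T = orderOf (q : ZMod n) := by
  refine ⟨(range (orderOf (q : ZMod n))).image (a * (q : ZMod n) ^ ·), ?_, ?_⟩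
  · ext x
    simp only [coe_image, coe_range, Set.mem_image, Set.mem_Iio]
    constructor
    · rintro ⟨t, -, rfl⟩
      exact ⟨t, rfl⟩
    · rintro ⟨t, rfl⟩
      exact ⟨t % orderOf (q : ZMod n), Nat.mod_lt _ hq.orderOf_pos, by rw [pow_mod_orderOf]⟩
  · rw [card_image_of_injOn, card_range]
    intro s hs t ht hst
    exact pow_injOn_Iio_orderOf (by simpa using hs) (by simpa using ht) (mul_left_cancel₀ ha hst)

end CyclotomicCoset

theorem exists_nested_polynomialCodes {K : Type*} [Field K] [Fintype K] [DecidableEq K]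
    {n m s : ℕ} (hn : (n : K) ≠ 0) {Z₁ Z₂ : Finset (ZMod n)}
    (hZ₁ : ∀ z ∈ Z₁, (Fintype.card K : ZMod n) * z ∈ Z₁)
    (hZ₂ : ∀ z ∈ Z₂, (Fintype.card K : ZMod n) * z ∈ Z₂)
    (hcard₁ : #Z₁ = m) (hcard₂ : #Z₂ = m) (hdisj : Disjoint Z₁ Z₂)
    (hneg : ∀ z ∈ Z₁ ∪ Z₂, ∀ w ∈ Z₁ ∪ Z₂, z + w ≠ 0)
    (hs₁ : ∀ r < 2, ((s + r : ℕ) : ZMod n) ∈ Z₁) (hs₂ : ((s + 2 : ℕ) : ZMod n) ∈ Z₂) :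
    ∃ C C' : Submodule K (Fin n → K), C ≤ C' ∧
      (∀ y : Fin n → K, (∀ x ∈ C, ∑ i, x i * y i = 0) → y ∈ C) ∧
      Module.finrank K C = n - 2 * m ∧
      (∀ x ∈ C, x ≠ 0 → 4 ≤ hammingNorm x) ∧
      Module.finrank K C' = n - m ∧
      (∀ x ∈ C', x ≠ 0 → 3 ≤ hammingNorm x) := by
  classical
  have : NeZero n := ⟨by rintro rfl; exact hn Nat.cast_zero⟩
  have := NeZero.mk hn
  obtain ⟨ζ, hζ⟩ : ∃ ζ : CyclotomicField n K, IsPrimitiveRoot ζ n :=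
    ⟨_, IsCyclotomicExtension.zeta_spec n K _⟩
  obtain ⟨g₁, hg₁, hdeg₁, hmap₁⟩ := hζ.exists_monic_map_eq_prod hZ₁
  obtain ⟨g₂, hg₂, hdeg₂, hmap₂⟩ := hζ.exists_monic_map_eq_prod hZ₂
  have hmap : (g₁ * g₂).map (algebraMap K _) = ∏ z ∈ Z₁ ∪ Z₂, (X - C (ζ ^ z.val)) := by
    rw [Polynomial.map_mul, hmap₁, hmap₂, prod_union hdisj]
  have hdeg : (g₁ * g₂).natDegree = 2 * m := by
    rw [hg₁.natDegree_mul hg₂, hdeg₁, hdeg₂, hcard₁, hcard₂, two_mul]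
  have h2m : 2 * m ≤ n := by
    simpa [card_union_of_disjoint hdisj, hcard₁, hcard₂, two_mul] using card_le_univ (Z₁ ∪ Z₂)
  refine ⟨polynomialCode n (g₁ * g₂), polynomialCode n g₁,
    polynomialCode_le_of_dvd (dvd_mul_right _ _), fun y hy => ?_,
    by rw [finrank_polynomialCode (hg₁.mul hg₂) (hdeg ▸ h2m), hdeg], fun x hx hx0 => ?_,
    by rw [finrank_polynomialCode hg₁ (by omega), hdeg₁, hcard₁], fun x hx hx0 => ?_⟩
  · refine mem_polynomialCode_of_orthogonal (S := (Z₁ ∪ Z₂).image fun z => ζ ^ z.val)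
      (by rw [hmap, prod_image fun z _ w _ h => hζ.pow_val_injective h]) ?_ ?_ hy
    · simp only [mem_image]
      rintro _ ⟨z, -, rfl⟩
      rw [pow_right_comm, hζ.pow_eq_one, one_pow]
    · simp only [mem_image]
      rintro _ ⟨z, hz, rfl⟩ _ ⟨w, hw, rfl⟩
      rw [Ne, hζ.pow_val_mul_pow_val_eq_one_iff]
      exact hneg z hz w hw
  · refine lt_hammingNorm_of_mem_polynomialCode hζ (b := s) (δ := 3) (fun r hr => ?_) hx hx0
    rw [hmap, ← hζ.pow_val_natCast]
    refine eval_prod_X_sub_C_eq_zero (f := fun z : ZMod n => ζ ^ z.val) ?_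
    rcases Nat.lt_or_ge r 2 with h | h
    · exact mem_union_left _ (hs₁ r h)
    · exact mem_union_right _ (show r = 2 by omega ▸ hs₂)
  · refine lt_hammingNorm_of_mem_polynomialCode hζ (b := s) (δ := 2) (fun r hr => ?_) hx hx0
    rw [hmap₁, ← hζ.pow_val_natCast]
    exact eval_prod_X_sub_C_eq_zero (f := fun z : ZMod n => ζ ^ z.val) (hs₁ r hr)

theorem stmt_10_general (q n m s : ℕ) (F : Type) [Field F] [Fintype F] [DecidableEq F]
    (hF : Fintype.card F = q)
    (hp : n.Prime) (hnq : q < n)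
    (hm : m = orderOf ((q : ZMod n)))
    (hcons : ((s : ZMod n) + 1) ∈ cyclotomicCoset q n (s : ZMod n))
    (hne : cyclotomicCoset q n (s : ZMod n) ≠ cyclotomicCoset q n ((s + 2 : ℕ) : ZMod n))
    (hZ : (cyclotomicCoset q n (s : ZMod n) ∪ cyclotomicCoset q n ((s + 2 : ℕ) : ZMod n)) ∩
        (Neg.neg '' (cyclotomicCoset q n (s : ZMod n) ∪
          cyclotomicCoset q n ((s + 2 : ℕ) : ZMod n))) = ∅) :
    ∃ C C' : Submodule F (Fin n → F), C ≤ C' ∧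
      (∀ y : Fin n → F, (∀ x ∈ C, ∑ i, x i * y i = 0) → y ∈ C) ∧
      Module.finrank F C = n - 2 * m ∧
      (∀ x ∈ C, x ≠ 0 → 4 ≤ hammingNorm x) ∧
      Module.finrank F C' = n - m ∧
      (∀ x ∈ C', x ≠ 0 → 3 ≤ hammingNorm x) := by
  have := Fact.mk hp
  have hq : IsOfFinOrder (q : ZMod n) := ZMod.isOfFinOrder_of_ne_zero <| by
    rw [Ne, ZMod.natCast_eq_zero_iff]
    exact fun h => (Nat.le_of_dvd (hF ▸ Fintype.card_pos) h).not_gt hnq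
  set Z := cyclotomicCoset q n s ∪ cyclotomicCoset q n ((s + 2 : ℕ) : ZMod n)
  have hneg : ∀ z ∈ Z, ∀ w ∈ Z, z + w ≠ 0 := fun z hz w hw h =>
    (Set.eq_empty_iff_forall_notMem.mp hZ) z ⟨hz, w, hw, neg_eq_of_add_eq_zero_left h⟩
  have hs : (s : ZMod n) ≠ 0 := fun h => by
    obtain ⟨t, ht⟩ := hcons
    simp [h] at ht
  have hs₂ : ((s + 2 : ℕ) : ZMod n) ≠ 0 := fun h => by
    have h0 : (0 : ZMod n) ∈ Z := Or.inr (h ▸ self_mem_cyclotomicCoset _)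
    exact hneg 0 h0 0 h0 (add_zero 0)
  obtain ⟨Z₁, hZ₁, hcard₁⟩ := exists_finset_coe_eq_cyclotomicCoset hq hs
  obtain ⟨Z₂, hZ₂, hcard₂⟩ := exists_finset_coe_eq_cyclotomicCoset hq hs₂
  have hstable : ∀ (T : Finset (ZMod n)) (a : ZMod n), ↑T = cyclotomicCoset q n a →
      ∀ z ∈ T, (Fintype.card F : ZMod n) * z ∈ T := fun T a hT z hz => by
    rw [← mem_coe, hT] at hz ⊢
    rw [hF]
    exact natCast_mul_mem_cyclotomicCoset hz
  have hZ₁₂ : ↑(Z₁ ∪ Z₂) = Z := by rw [coe_union, hZ₁, hZ₂]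
  refine exists_nested_polynomialCodes (FiniteField.natCast_ne_zero_of_card_lt hp (hF ▸ hnq))
    (hstable Z₁ _ hZ₁) (hstable Z₂ _ hZ₂) (hcard₁.trans hm.symm) (hcard₂.trans hm.symm)
    (by rw [← disjoint_coe, hZ₁, hZ₂]; exact disjoint_cyclotomicCoset hq hne)
    (fun z hz w hw => hneg z (hZ₁₂ ▸ mem_coe.mpr hz) w (hZ₁₂ ▸ mem_coe.mpr hw))
    (fun r hr => ?_) (by rw [← mem_coe, hZ₂]; exact self_mem_cyclotomicCoset _)
  rw [← mem_coe, hZ₁]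
  interval_cases r
  · simpa using self_mem_cyclotomicCoset (q := q) (s : ZMod n)
  · simpa using hcons

theorem stmt_10 (q n m s : ℕ) (F : Type) [Field F] [Fintype F] [DecidableEq F]
    (hF : Fintype.card F = q)
    (hq : IsPrimePow q) (hq3 : 3 ≤ q) (hp : n.Prime) (hnq : q < n)
    (hm : m = orderOf ((q : ZMod n))) (hm2 : 2 ≤ m)
    (hcons : ((s : ZMod n) + 1) ∈ cyclotomicCoset q n (s : ZMod n))
    (hne : cyclotomicCoset q n (s : ZMod n) ≠ cyclotomicCoset q n ((s + 2 : ℕ) : ZMod n))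
    (hZ : (cyclotomicCoset q n (s : ZMod n) ∪ cyclotomicCoset q n ((s + 2 : ℕ) : ZMod n)) ∩
        (Neg.neg '' (cyclotomicCoset q n (s : ZMod n) ∪
          cyclotomicCoset q n ((s + 2 : ℕ) : ZMod n))) = ∅) :
    ∃ C C' : Submodule F (Fin n → F), C ≤ C' ∧
      (∀ y : Fin n → F, (∀ x ∈ C, ∑ i, x i * y i = 0) → y ∈ C) ∧
      Module.finrank F C = n - 2 * m ∧
      (∀ x ∈ C, x ≠ 0 → 4 ≤ hammingNorm x) ∧
      Module.finrank F C' = n - m ∧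
      (∀ x ∈ C', x ≠ 0 → 3 ≤ hammingNorm x) :=
  stmt_10_general q n m s F hF hp hnq hm hcons hne hZ
end

section
/- Let q > 3 be a prime power and n > q² an integer with gcd(q, n) = 1, (q² − 1) | n, ord_n(q²) = 2, and n = r(q² − 1). Then for all integers i, j with 0 ≤ i, j ≤ r − 2 and for l ∈ {0, 2}, one has (r + j)·q^l ≢ −q·(r + i) (mod n); equivalently, the set Z = C_[r] ∪ C_[r+1] ∪ … ∪ C_[2r−2] of q²-ary cyclotomic cosets modulo n satisfies Z ∩ Z^{−q} = ∅, where Z^{−q} = { −q·z mod n : z ∈ Z }. -/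
theorem stmt_15 (q n r : ℕ) (hq : IsPrimePow q) (hq3 : 3 < q) (hnq : q ^ 2 < n)
    (hgcd : Nat.gcd q n = 1) (hdvd : (q ^ 2 - 1) ∣ n)
    (hord : orderOf (((q ^ 2 : ℕ) : ZMod n)) = 2) (hn : n = r * (q ^ 2 - 1)) :
    (∀ i j : ℕ, i ≤ r - 2 → j ≤ r - 2 → ∀ l : ℕ, l = 0 ∨ l = 2 →
      ¬ ((r + j) * q ^ l + q * (r + i) ≡ 0 [MOD n])) ∧
    (⋃ i ∈ {i : ℕ | i ≤ r - 2}, cyclotomicCoset (q ^ 2) n ((r + i : ℕ) : ZMod n)) ∩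
      ((fun z : ZMod n => -((q : ZMod n) * z)) ''
        ⋃ i ∈ {i : ℕ | i ≤ r - 2}, cyclotomicCoset (q ^ 2) n ((r + i : ℕ) : ZMod n)) = ∅ := by
  have hr1 : 1 ≤ r := by
    rcases Nat.eq_zero_or_pos r with h | h
    · subst h; simp at hn; omega
    · exact h
  obtain ⟨s, hs⟩ : ∃ s, q ^ 2 = s + 1 := ⟨q ^ 2 - 1, (Nat.succ_pred_eq_of_pos (by positivity)).symm⟩
  have hs' : q ^ 2 - 1 = s := by omega
  rw [hs'] at hn
  -- The key arithmetic lemma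
  have keyA : ∀ i j : ℕ, i ≤ r - 2 → j ≤ r - 2 → ∀ l : ℕ, l = 0 ∨ l = 2 →
      ¬ (n ∣ (r + j) * q ^ l + q * (r + i)) := by
    intro i j hi hj l hl hdvd'
    have hir : i ≤ r := le_trans hi (Nat.sub_le r 2)
    have hjr : j ≤ r := le_trans hj (Nat.sub_le r 2)
    rcases hl with rfl | rfl
    · -- l = 0 : the quantity is positive and < n
      have hpos : 0 < (r + j) * q ^ 0 + q * (r + i) := by
        have : 0 < r + j := by omega
        simp only [pow_zero, mul_one]; omega
      have hle := Nat.le_of_dvd hpos hdvd'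
      rw [hn] at hle
      have hcore : 2 + 2 * q < s := by nlinarith [hs, hq3]
      have h1 : (r + j) * q ^ 0 ≤ 2 * r := by simp only [pow_zero, mul_one]; omega
      have h2 : q * (r + i) ≤ q * (2 * r) := Nat.mul_le_mul_left q (by omega)
      have h3 : r * (2 + 2 * q) < r * s := mul_lt_mul_of_pos_left hcore (by omega : 0 < r)
      have hfin : r * s < r * s := by
        calc r * s ≤ (r + j) * q ^ 0 + q * (r + i) := hle
          _ ≤ 2 * r + q * (2 * r) := Nat.add_le_add h1 h2
          _ = r * (2 + 2 * q) := by ring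
          _ < r * s := h3
      exact lt_irrefl _ hfin
    · -- l = 2 : q divides the quantity, so q*n divides it, but it is < q*n
      have hqdvd : q ∣ (r + j) * q ^ 2 + q * (r + i) :=
        Dvd.dvd.add ⟨(r + j) * q, by ring⟩ ⟨r + i, rfl⟩
      have hcop : Nat.Coprime q n := hgcd
      have hqn : q * n ∣ (r + j) * q ^ 2 + q * (r + i) :=
        Nat.Coprime.mul_dvd_of_dvd_of_dvd hcop hqdvd hdvd'
      have hpos : 0 < (r + j) * q ^ 2 + q * (r + i) := by
        have h0 : 0 < r + j := by omega
        have h1 : 0 < q ^ 2 := by positivity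
        exact Nat.add_pos_left (Nat.mul_pos h0 h1) _
      have hle := Nat.le_of_dvd hpos hqn
      rw [hn] at hle
      have hcore : 2 * (s + 1) + 2 * q < q * s := by nlinarith [hs, hq3]
      have h1 : (r + j) * q ^ 2 ≤ 2 * r * (s + 1) := by
        rw [hs]; exact Nat.mul_le_mul_right (s + 1) (by omega)
      have h2 : q * (r + i) ≤ q * (2 * r) := Nat.mul_le_mul_left q (by omega)
      have h3 : r * (2 * (s + 1) + 2 * q) < r * (q * s) :=
        mul_lt_mul_of_pos_left hcore (by omega : 0 < r)
      have hfin : q * (r * s) < q * (r * s) := by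
        calc q * (r * s) ≤ (r + j) * q ^ 2 + q * (r + i) := hle
          _ ≤ 2 * r * (s + 1) + q * (2 * r) := Nat.add_le_add h1 h2
          _ = r * (2 * (s + 1) + 2 * q) := by ring
          _ < r * (q * s) := h3
          _ = q * (r * s) := by ring
      exact lt_irrefl _ hfin
  constructor
  · intro i j hi hj l hl h
    exact keyA i j hi hj l hl (Nat.modEq_zero_iff_dvd.mp h)
  · -- set-theoretic part
    ext x
    simp only [Set.mem_inter_iff, Set.mem_iUnion, Set.mem_image, Set.mem_setOf_eq,
      cyclotomicCoset, Set.mem_empty_iff_false, iff_false]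
    rintro ⟨⟨i, hi, t, hxt⟩, z, ⟨j, hj, s', hzs⟩, hxz⟩
    have hQ2 : (((q ^ 2 : ℕ) : ZMod n)) ^ 2 = 1 := by
      have := pow_orderOf_eq_one (((q ^ 2 : ℕ) : ZMod n))
      rwa [hord] at this
    set Q : ZMod n := ((q ^ 2 : ℕ) : ZMod n) with hQ
    have hpow : ∀ u : ℕ, Q ^ u = Q ^ (u % 2) := by
      intro u
      conv_lhs => rw [← Nat.div_add_mod u 2]
      rw [pow_add, pow_mul, hQ2, one_pow, one_mul]
    have heq : ((r + i : ℕ) : ZMod n) * Q ^ (t % 2)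
        + (q : ZMod n) * (((r + j : ℕ) : ZMod n) * Q ^ (s' % 2)) = 0 := by
      rw [← hpow, ← hpow, ← hxt, ← hzs, ← hxz]; ring
    have hQq : Q = (q : ZMod n) ^ 2 := by rw [hQ]; push_cast; ring
    have hq4 : ((q : ZMod n)) ^ 4 = 1 := by
      have h := hQ2; rw [hQq] at h
      calc ((q:ZMod n))^4 = ((q:ZMod n)^2)^2 := by ring
        _ = 1 := h
    have contra : ∀ l : ℕ, l = 0 ∨ l = 2 →
        (((r + i) * q ^ l + q * (r + j) : ℕ) : ZMod n) = 0 → False := by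
      intro l hl hc
      rw [ZMod.natCast_eq_zero_iff] at hc
      exact keyA j i hj hi l hl hc
    rcases Nat.mod_two_eq_zero_or_one t with ht | ht <;>
      rcases Nat.mod_two_eq_zero_or_one s' with hsp | hsp <;>
      rw [ht, hsp] at heq <;>
      simp only [pow_zero, pow_one, mul_one, hQq] at heq <;>
      push_cast at heq
    · refine contra 0 (Or.inl rfl) ?_
      push_cast
      linear_combination heq
    · refine contra 2 (Or.inr rfl) ?_
      push_cast
      linear_combination (q : ZMod n) ^ 2 * heq
        - (q : ZMod n) * ((r : ZMod n) + (j : ZMod n)) * hq4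
    · refine contra 2 (Or.inr rfl) ?_
      push_cast
      linear_combination heq
    · refine contra 0 (Or.inl rfl) ?_
      push_cast
      linear_combination (q : ZMod n) ^ 2 * heq
        - (((r : ZMod n) + (i : ZMod n)) + (q : ZMod n) * ((r : ZMod n) + (j : ZMod n))) * hq4
end
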